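/- The language (aa)* over alphabet {a} (words of even length) is not recognizable by any C-RASP program without positional relations. -/

import Mathlib

mutual
/-- Syntax of C-RASP programs without positional relations: Boolean-valued
operations. A program (a sequence of operations, each possibly referring to
earlier ones) is represented by the expression tree of its final
Boolean-valued operation. -/
inductive BExpr (α : Type) : Type
  | tok : α → BExpr α                      -- initial operation `Q_σ(i)`
  | not : BExpr α → BExpr α                -- Boolean negation
  | and : BExpr α → BExpr α → BExpr α      -- Boolean conjunction
  | top : BExpr α                          -- constant ⊤
  | le  : CExpr α → CExpr α → BExpr α      -- comparison `C₁(i) ≤ C₂(i)`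
/-- Count-valued C-RASP operations. -/
inductive CExpr (α : Type) : Type
  | count : BExpr α → CExpr α              -- `#{j ≤ i : P(j)}`
  | cond  : BExpr α → CExpr α → CExpr α → CExpr α  -- conditional
  | add : CExpr α → CExpr α → CExpr α      -- addition
  | sub : CExpr α → CExpr α → CExpr α      -- subtraction
  | one : CExpr α                          -- constant 1
end

mutual
/-- Evaluation of a Boolean-valued C-RASP operation on word `w` at
(0-based) position `i`. -/
def BExpr.eval {α : Type} [DecidableEq α] (w : List α) : BExpr α → ℕ → Bool
  | .tok σ, i => decide (w[i]? = some σ)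
  | .not b, i => ! b.eval w i
  | .and b₁ b₂, i => b₁.eval w i && b₂.eval w i
  | .top, _ => true
  | .le c₁ c₂, i => decide (c₁.eval w i ≤ c₂.eval w i)
/-- Evaluation of a count-valued C-RASP operation on word `w` at position `i`. -/
def CExpr.eval {α : Type} [DecidableEq α] (w : List α) : CExpr α → ℕ → ℤ
  | .count b, i => ((List.range (i + 1)).countP (fun j => b.eval w j) : ℤ)
  | .cond b c₁ c₂, i => if b.eval w i then c₁.eval w i else c₂.eval w i
  | .add c₁ c₂, i => c₁.eval w i + c₂.eval w i
  | .sub c₁ c₂, i => c₁.eval w i - c₂.eval w i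
  | .one, _ => 1
end

/-- A C-RASP program accepts a word iff its final Boolean-valued operation is
true at the last position of the word. -/
def BExpr.accepts {α : Type} [DecidableEq α] (P : BExpr α) (w : List α) : Prop :=
  P.eval w (w.length - 1) = true

/-!
On a unary word `σᵐ`, position `i < m` sees the same prefix as on the infinite word `σσσ⋯`,
so every operation of a C-RASP program is a function of the position alone. By induction on the
program, Boolean operations are eventually constant and count operations are eventually affine in
the position: counting an eventually constant predicate grows affinely, and the comparison of two
affine functions is eventually decided by their slopes. Hence a program accepts `σᵐ` either for
all large `m` or for no large `m`, and cannot single out the words of even length.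
-/

open Filter

theorem eventuallyConst_decide_affine_nonneg (a b : ℤ) :
    EventuallyConst (fun i : ℕ => decide (0 ≤ a + b * i)) atTop := by
  rw [eventuallyConst_iff_exists_eventuallyEq]
  rcases lt_trichotomy b 0 with hb | rfl | hb
  · have h := tendsto_natCast_atTop_atTop.const_mul_atTop' (neg_pos.2 hb)
    refine ⟨false, ?_⟩
    filter_upwards [h.eventually_ge_atTop (a + 1)] with i hi
    simp only [decide_eq_false_iff_not, not_le]
    linarith
  · exact ⟨decide (0 ≤ a), .of_eq (by simp)⟩
  · have h := tendsto_natCast_atTop_atTop.const_mul_atTop' hb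
    refine ⟨true, ?_⟩
    filter_upwards [h.eventually_ge_atTop (-a)] with i hi
    simp only [decide_eq_true_eq]
    linarith

def EventuallyAffine (f : ℕ → ℤ) : Prop :=
  ∃ a b : ℤ, f =ᶠ[atTop] fun i => a + b * i

namespace EventuallyAffine

variable {f g : ℕ → ℤ}

theorem congr (hf : EventuallyAffine f) (h : f =ᶠ[atTop] g) : EventuallyAffine g :=
  let ⟨a, b, hab⟩ := hf
  ⟨a, b, h.symm.trans hab⟩

theorem const (a : ℤ) : EventuallyAffine fun _ => a :=
  ⟨a, 0, .of_eq (by simp)⟩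

theorem add (hf : EventuallyAffine f) (hg : EventuallyAffine g) :
    EventuallyAffine fun i => f i + g i := by
  obtain ⟨a₁, b₁, h₁⟩ := hf
  obtain ⟨a₂, b₂, h₂⟩ := hg
  refine ⟨a₁ + a₂, b₁ + b₂, (h₁.add h₂).trans (.of_eq ?_)⟩
  funext i
  simp only [Pi.add_apply]
  ring

theorem sub (hf : EventuallyAffine f) (hg : EventuallyAffine g) :
    EventuallyAffine fun i => f i - g i := by
  obtain ⟨a₁, b₁, h₁⟩ := hf
  obtain ⟨a₂, b₂, h₂⟩ := hg
  refine ⟨a₁ - a₂, b₁ - b₂, (h₁.sub h₂).trans (.of_eq ?_)⟩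
  funext i
  simp only [Pi.sub_apply]
  ring

theorem ite {p : ℕ → Bool} (hp : EventuallyConst p atTop) (hf : EventuallyAffine f)
    (hg : EventuallyAffine g) : EventuallyAffine fun i => if p i then f i else g i := by
  obtain ⟨c, hc⟩ := eventuallyConst_iff_exists_eventuallyEq.1 hp
  cases c
  · exact hg.congr (hc.mono fun i hi => by simp [hi])
  · exact hf.congr (hc.mono fun i hi => by simp [hi])

theorem eventuallyConst_decide_le (hf : EventuallyAffine f)
    (hg : EventuallyAffine g) : EventuallyConst (fun i => decide (f i ≤ g i)) atTop := by
  obtain ⟨a, b, h⟩ := hg.sub hf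
  exact (eventuallyConst_decide_affine_nonneg a b).congr (h.mono fun i hi => by simp [← hi])

theorem countP {p : ℕ → Bool} (hp : EventuallyConst p atTop) :
    EventuallyAffine fun i => ((List.range (i + 1)).countP p : ℤ) := by
  obtain ⟨N, hN⟩ := eventuallyConst_atTop.1 hp
  generalize p N = c at hN
  have count_succ : ∀ n, N ≤ n →
      ((List.range (n + 1 + 1)).countP p : ℤ) = (List.range (n + 1)).countP p + c.toNat := by
    intro n hn
    rw [List.range_succ (n := n + 1), List.countP_append, List.countP_singleton,
      hN (n + 1) (by omega)]
    cases c <;> simp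
  refine ⟨(List.range (N + 1)).countP p - c.toNat * N, c.toNat,
    eventually_atTop.2 ⟨N, fun i hi => ?_⟩⟩
  induction i, hi using Nat.le_induction with
  | base => ring
  | succ n hn ih =>
    dsimp only at ih ⊢
    rw [count_succ n hn, ih]
    push_cast
    ring

end EventuallyAffine

mutual
def BExpr.evalRepeat {α : Type} [DecidableEq α] (σ : α) : BExpr α → ℕ → Bool
  | .tok τ, _ => decide (σ = τ)
  | .not b, i => ! b.evalRepeat σ i
  | .and b₁ b₂, i => b₁.evalRepeat σ i && b₂.evalRepeat σ i
  | .top, _ => true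
  | .le c₁ c₂, i => decide (c₁.evalRepeat σ i ≤ c₂.evalRepeat σ i)
def CExpr.evalRepeat {α : Type} [DecidableEq α] (σ : α) : CExpr α → ℕ → ℤ
  | .count b, i => ((List.range (i + 1)).countP (fun j => b.evalRepeat σ j) : ℤ)
  | .cond b c₁ c₂, i => if b.evalRepeat σ i then c₁.evalRepeat σ i else c₂.evalRepeat σ i
  | .add c₁ c₂, i => c₁.evalRepeat σ i + c₂.evalRepeat σ i
  | .sub c₁ c₂, i => c₁.evalRepeat σ i - c₂.evalRepeat σ i
  | .one, _ => 1
end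

section Replicate

variable {α : Type} [DecidableEq α] (σ : α)

mutual
theorem BExpr.eval_replicate : ∀ (B : BExpr α) {m i : ℕ}, i < m →
    B.eval (List.replicate m σ) i = B.evalRepeat σ i
  | .tok τ, _, _, h => by simp [BExpr.eval, BExpr.evalRepeat, h]
  | .not b, _, _, h => by simp [BExpr.eval, BExpr.evalRepeat, b.eval_replicate h]
  | .and b₁ b₂, _, _, h => by
      simp [BExpr.eval, BExpr.evalRepeat, b₁.eval_replicate h, b₂.eval_replicate h]
  | .top, _, _, _ => rfl
  | .le c₁ c₂, _, _, h => by
      simp [BExpr.eval, BExpr.evalRepeat, c₁.eval_replicate h, c₂.eval_replicate h]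
theorem CExpr.eval_replicate : ∀ (C : CExpr α) {m i : ℕ}, i < m →
    C.eval (List.replicate m σ) i = C.evalRepeat σ i
  | .count b, _, _, h => by
      simp only [CExpr.eval, CExpr.evalRepeat]
      congr 1
      refine List.countP_congr fun j hj => ?_
      rw [b.eval_replicate (by simp at hj; omega)]
  | .cond b c₁ c₂, _, _, h => by
      simp [CExpr.eval, CExpr.evalRepeat, b.eval_replicate h, c₁.eval_replicate h,
        c₂.eval_replicate h]
  | .add c₁ c₂, _, _, h => by
      simp [CExpr.eval, CExpr.evalRepeat, c₁.eval_replicate h, c₂.eval_replicate h]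
  | .sub c₁ c₂, _, _, h => by
      simp [CExpr.eval, CExpr.evalRepeat, c₁.eval_replicate h, c₂.eval_replicate h]
  | .one, _, _, _ => rfl
end

theorem BExpr.accepts_replicate_succ_iff (P : BExpr α) (m : ℕ) :
    P.accepts (List.replicate (m + 1) σ) ↔ P.evalRepeat σ m = true := by
  rw [BExpr.accepts, List.length_replicate, Nat.add_sub_cancel,
    P.eval_replicate σ (Nat.lt_succ_self m)]

mutual
theorem BExpr.eventuallyConst_evalRepeat :
    ∀ B : BExpr α, EventuallyConst (B.evalRepeat σ) atTop
  | .tok _ => .const _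
  | .top => .const _
  | .not b => b.eventuallyConst_evalRepeat.comp (!·)
  | .and b₁ b₂ =>
      b₁.eventuallyConst_evalRepeat.comp₂ (· && ·) b₂.eventuallyConst_evalRepeat
  | .le c₁ c₂ =>
      c₁.eventuallyAffine_evalRepeat.eventuallyConst_decide_le
        c₂.eventuallyAffine_evalRepeat
theorem CExpr.eventuallyAffine_evalRepeat :
    ∀ C : CExpr α, EventuallyAffine (C.evalRepeat σ)
  | .one => .const 1
  | .count b => .countP b.eventuallyConst_evalRepeat
  | .cond b c₁ c₂ =>
      .ite b.eventuallyConst_evalRepeat c₁.eventuallyAffine_evalRepeat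
        c₂.eventuallyAffine_evalRepeat
  | .add c₁ c₂ =>
      c₁.eventuallyAffine_evalRepeat.add c₂.eventuallyAffine_evalRepeat
  | .sub c₁ c₂ =>
      c₁.eventuallyAffine_evalRepeat.sub c₂.eventuallyAffine_evalRepeat
end

end Replicate

/-- The language `(aa)*` of even-length words over the unary alphabet is not
recognizable by any C-RASP program without positional relations. -/
theorem stmt12 :
    ¬ ∃ P : BExpr Unit, ∀ m : ℕ, (P.accepts (List.replicate m ()) ↔ Even m) := by
  rintro ⟨P, hP⟩
  obtain ⟨n, hn⟩ := eventuallyConst_atTop_nat.1 (P.eventuallyConst_evalRepeat ())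
  have h_odd := hP (2 * n + 1)
  have h_even := hP (2 * n + 1 + 1)
  rw [P.accepts_replicate_succ_iff] at h_odd h_even
  rw [hn (2 * n) (by omega)] at h_even
  exact (Nat.not_even_bit1 n) (h_odd.1 (h_even.2 ⟨n + 1, by ring⟩))
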